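/- arXiv:math/0611019 — 3 statements merged into one kernel-verified Lean document; each statement's English description precedes it below -/
import Mathlib

section
/- The map Exp from the set of formal vector fields on C^2 of order ≥ 2 to the group of formal diffeomorphisms of C^2 tangent to the identity, defined by Exp(X) = (exp X(x), exp X(y)), is a bijection. -/
open Finsupp

noncomputable section

abbrev F2 : Type := MvPowerSeries (Fin 2) ℂ

/-- total degree of a monomial exponent -/
def deg (d : Fin 2 →₀ ℕ) : ℕ := d 0 + d 1

/-- the exponent (m, n) -/
def idx (m n : ℕ) : Fin 2 →₀ ℕ := Finsupp.single 0 m + Finsupp.single 1 n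

/-- partial derivative of a formal power series -/
def pd (i : Fin 2) (f : F2) : F2 :=
  fun d => ((d i : ℂ) + 1) * MvPowerSeries.coeff (d + Finsupp.single i 1) f

/-- the derivation a ∂/∂x + b ∂/∂y applied to g -/
def vf (a b g : F2) : F2 := a * pd 0 g + b * pd 1 g

/-- `ordGE f k` : the order ν(f) is at least k -/
def ordGE (f : F2) (k : ℕ) : Prop :=
  ∀ d : Fin 2 →₀ ℕ, deg d < k → MvPowerSeries.coeff d f = 0

/-- exp X (g) = Σ_j (1/j!) X^j(g), coefficientwise -/
def expX (a b g : F2) : F2 :=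
  fun d => ∑' j : ℕ, ((j.factorial : ℂ))⁻¹ * MvPowerSeries.coeff d ((vf a b)^[j] g)

/-- degree-k homogeneous part -/
def HT (k : ℕ) (f : F2) : F2 :=
  fun d => if deg d = k then MvPowerSeries.coeff d f else 0

/-- substitution y := x·v :  f(x, xv), in coordinates (x, v) -/
def blowup (f : F2) : F2 :=
  fun d => if d 1 ≤ d 0 then MvPowerSeries.coeff (idx (d 0 - d 1) (d 1)) f else 0

/-- `dehom k f` = f_k(1, v), where f_k is the degree-k homogeneous part of f -/
def dehom (k : ℕ) (f : F2) : F2 :=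
  fun d => if d 0 = 0 ∧ d 1 ≤ k then MvPowerSeries.coeff (idx (k - d 1) (d 1)) f else 0

/-- evaluation of the degree-k homogeneous part of f at (1, v0) -/
def evk (k : ℕ) (v0 : ℂ) (f : F2) : ℂ :=
  ∑ n ∈ Finset.range (k+1), MvPowerSeries.coeff (idx (k-n) n) f * v0 ^ n

/-- the linear change of coordinates f(x, y) ↦ f(x, y + v0·x) -/
def shear (v0 : ℂ) (f : F2) : F2 :=
  fun d => ∑ j ∈ Finset.range (deg d + 1),
    if d 1 ≤ j ∧ j - d 1 ≤ d 0 then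
      (j.choose (d 1) : ℂ) * v0 ^ (j - d 1) *
        MvPowerSeries.coeff (idx (d 0 - (j - d 1)) j) f
    else 0

/-- the coordinate x -/
def Xv : F2 := MvPowerSeries.X 0
/-- the coordinate y (alias v in the blow-up chart) -/
def Yv : F2 := MvPowerSeries.X 1

end

/-!
Write `X = a ∂/∂x + b ∂/∂y`. Since `X` raises orders by at least one, the degree-`d` coefficient
of `exp X (x) = x + a + Σ_{j ≥ 2} X^j(x) / j!` is `a_d` plus a quantity depending only on the
coefficients of `a` and `b` of degree `< |d|`: changing `(a, b)` from degree `m` on changes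
`X^j(x)` only from degree `m + j - 1` on. So `Exp X = (x + p, y + q)` is a triangular system
`a_d = p_d - R_d(a, b)`, `b_d = q_d - S_d(a, b)`, which has exactly one solution, found by
recursion on the degree.
-/

open MvPowerSeries

theorem WellFounded.existsUnique_isFixedPt_of_causal {ι β : Type*} [Nonempty β]
    {r : ι → ι → Prop} (hr : WellFounded r) (Φ : (ι → β) → ι → β)
    (hΦ : ∀ u v d, (∀ e, r e d → u e = v e) → Φ u d = Φ v d) :
    ∃! u, Function.IsFixedPt Φ u := by
  classical
  refine ⟨hr.fix fun d rec =>
      Φ (fun e => if h : r e d then rec e h else Classical.arbitrary β) d,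
    funext fun d => ?_, fun v hv => funext fun d => ?_⟩
  · rw [hr.fix_eq]
    exact hΦ _ _ d fun e he => by simp [he]
  · induction d using hr.induction with
    | _ d ih => rw [← hv, hr.fix_eq]; exact hΦ _ _ d fun e he => by simp [he, ih e he]

lemma deg_add (u v : Fin 2 →₀ ℕ) : deg (u + v) = deg u + deg v := by
  simp only [deg, Finsupp.add_apply]; ring

lemma deg_single_one (i : Fin 2) : deg (Finsupp.single i 1) = 1 := by
  fin_cases i <;> simp [deg]

namespace ordGE

variable {f g : F2} {k : ℕ}

lemma mono (hf : ordGE f k) {l : ℕ} (hlk : l ≤ k) : ordGE f l :=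
  fun d hd => hf d (by omega)

lemma add (hf : ordGE f k) (hg : ordGE g k) : ordGE (f + g) k :=
  fun d hd => by rw [map_add, hf d hd, hg d hd, add_zero]

lemma sub (hf : ordGE f k) (hg : ordGE g k) : ordGE (f - g) k :=
  fun d hd => by rw [map_sub, hf d hd, hg d hd, sub_zero]

lemma mul {m : ℕ} (hf : ordGE f k) (hg : ordGE g m) : ordGE (f * g) (k + m) := by
  intro d hd
  rw [coeff_mul]
  refine Finset.sum_eq_zero fun x hx => ?_
  have hdeg : deg x.1 + deg x.2 = deg d := by
    rw [← deg_add, Finset.HasAntidiagonal.mem_antidiagonal.mp hx]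
  rcases lt_or_ge (deg x.1) k with h | h
  · rw [hf x.1 h, zero_mul]
  · rw [hg x.2 (by omega), mul_zero]

end ordGE

lemma ordGE_Xv : ordGE Xv 1 := fun d hd => by
  rw [Xv, coeff_X, if_neg]
  rintro rfl
  rw [deg_single_one] at hd
  omega

lemma ordGE_Yv : ordGE Yv 1 := fun d hd => by
  rw [Yv, coeff_X, if_neg]
  rintro rfl
  rw [deg_single_one] at hd
  omega

lemma coeff_pd (i : Fin 2) (f : F2) (d : Fin 2 →₀ ℕ) :
    coeff d (pd i f) = ((d i : ℂ) + 1) * coeff (d + Finsupp.single i 1) f := rfl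

lemma pd_sub (i : Fin 2) (f g : F2) : pd i (f - g) = pd i f - pd i g := by
  ext d
  simp only [coeff_pd, map_sub, mul_sub]

lemma ordGE.pd {g : F2} {k : ℕ} (i : Fin 2) (hg : ordGE g k) : ordGE (pd i g) (k - 1) := by
  intro d hd
  rw [coeff_pd, hg _ (by rw [deg_add, deg_single_one]; omega), mul_zero]

lemma pd_X_self (i : Fin 2) : pd i (X i) = 1 := by
  ext d
  rw [coeff_pd, coeff_X, coeff_one]
  by_cases hd : d = 0 <;> simp [hd]

lemma pd_X_of_ne {i j : Fin 2} (hij : i ≠ j) : pd i (X j) = 0 := by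
  ext d
  rw [coeff_pd, coeff_X, if_neg, mul_zero, map_zero]
  intro h
  simpa [hij] using DFunLike.congr_fun h i

section VectorField

variable {a b a' b' g : F2}

lemma vf_Xv : vf a b Xv = a := by
  simp only [vf, Xv, pd_X_self, pd_X_of_ne (by decide : (1 : Fin 2) ≠ 0), mul_one, mul_zero,
    add_zero]

lemma vf_Yv : vf a b Yv = b := by
  simp only [vf, Yv, pd_X_self, pd_X_of_ne (by decide : (0 : Fin 2) ≠ 1), mul_one, mul_zero,
    zero_add]

lemma ordGE_vf (ha : ordGE a 2) (hb : ordGE b 2) {k : ℕ} (hg : ordGE g k) :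
    ordGE (vf a b g) (k + 1) :=
  ((ha.mul (hg.pd 0)).add (hb.mul (hg.pd 1))).mono (by omega)

lemma ordGE_iterate_vf (ha : ordGE a 2) (hb : ordGE b 2) (hg : ordGE g 1) (j : ℕ) :
    ordGE ((vf a b)^[j] g) (j + 1) := by
  induction j with
  | zero => simpa using hg
  | succ j ih => rw [Function.iterate_succ_apply']; exact ordGE_vf ha hb ih

lemma ordGE_iterate_vf_sub (ha : ordGE a 2) (hb : ordGE b 2) (ha' : ordGE a' 2)
    (hb' : ordGE b' 2) (hg : ordGE g 1) {m : ℕ} (hda : ordGE (a - a') m)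
    (hdb : ordGE (b - b') m) (j : ℕ) :
    ordGE ((vf a b)^[j] g - (vf a' b')^[j] g) (m + j - 1) := by
  induction j with
  | zero => intro d _; simp
  | succ j ih =>
    set h := (vf a b)^[j] g
    set h' := (vf a' b')^[j] g
    have hh : ordGE h (j + 1) := ordGE_iterate_vf ha hb hg j
    have hsplit : vf a b h - vf a' b' h' = ((a - a') * pd 0 h + a' * pd 0 (h - h'))
        + ((b - b') * pd 1 h + b' * pd 1 (h - h')) := by
      simp only [vf, pd_sub]; ring
    rw [Function.iterate_succ_apply', Function.iterate_succ_apply', hsplit]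
    refine (((hda.mul (hh.pd 0)).mono ?_).add ((ha'.mul (ih.pd 0)).mono ?_)).add
      (((hdb.mul (hh.pd 1)).mono ?_).add ((hb'.mul (ih.pd 1)).mono ?_)) <;> omega

noncomputable def expRem (a b g : F2) : F2 :=
  fun d => ∑' j : ℕ, ((j + 2).factorial : ℂ)⁻¹ * coeff d ((vf a b)^[j + 2] g)

lemma coeff_expRem (d : Fin 2 →₀ ℕ) : coeff d (expRem a b g) =
    ∑' j : ℕ, ((j + 2).factorial : ℂ)⁻¹ * coeff d ((vf a b)^[j + 2] g) := rfl

lemma coeff_expX (d : Fin 2 →₀ ℕ) : coeff d (expX a b g) =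
    ∑' j : ℕ, ((j.factorial : ℂ))⁻¹ * coeff d ((vf a b)^[j] g) := rfl

lemma expX_eq_add_expRem (ha : ordGE a 2) (hb : ordGE b 2) (hg : ordGE g 1) :
    expX a b g = g + vf a b g + expRem a b g := by
  ext d
  have hsum : Summable fun j : ℕ => ((j.factorial : ℂ))⁻¹ * coeff d ((vf a b)^[j] g) :=
    summable_of_ne_finset_zero (s := Finset.range (deg d)) fun j hj => by
      rw [ordGE_iterate_vf ha hb hg j d (by simp at hj; omega), mul_zero]
  rw [coeff_expX, hsum.tsum_eq_zero_add, ((summable_nat_add_iff 1).2 hsum).tsum_eq_zero_add,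
    map_add, map_add, coeff_expRem]
  simp only [zero_add, Function.iterate_zero, id, Function.iterate_one, Nat.factorial_zero,
    Nat.factorial_one, Nat.cast_one, inv_one, one_mul, add_assoc]

lemma ordGE_expRem (ha : ordGE a 2) (hb : ordGE b 2) (hg : ordGE g 1) :
    ordGE (expRem a b g) 3 := fun d hd => by
  rw [coeff_expRem]
  exact (tsum_congr fun j => by
    rw [ordGE_iterate_vf ha hb hg (j + 2) d (by omega), mul_zero]).trans tsum_zero

lemma coeff_expRem_congr (ha : ordGE a 2) (hb : ordGE b 2) (ha' : ordGE a' 2)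
    (hb' : ordGE b' 2) (hg : ordGE g 1) {d : Fin 2 →₀ ℕ} (hda : ordGE (a - a') (deg d))
    (hdb : ordGE (b - b') (deg d)) :
    coeff d (expRem a b g) = coeff d (expRem a' b' g) := by
  rw [coeff_expRem, coeff_expRem]
  refine tsum_congr fun j => ?_
  have hdiff := ordGE_iterate_vf_sub ha hb ha' hb' hg hda hdb (j + 2) d (by omega)
  rw [map_sub, sub_eq_zero] at hdiff
  rw [hdiff]

end VectorField

def dropBelow (k : ℕ) (f : F2) : F2 := fun d => if deg d < k then 0 else coeff d f

section DropBelow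

variable {k : ℕ} {f g : F2}

lemma coeff_dropBelow (d : Fin 2 →₀ ℕ) :
    coeff d (dropBelow k f) = if deg d < k then 0 else coeff d f := rfl

lemma ordGE_dropBelow : ordGE (dropBelow k f) k := fun d hd => by
  rw [coeff_dropBelow, if_pos hd]

lemma dropBelow_eq_self (hf : ordGE f k) : dropBelow k f = f := by
  ext d
  rw [coeff_dropBelow]
  split_ifs with hd
  · exact (hf d hd).symm
  · rfl

lemma ordGE_dropBelow_sub {m : ℕ} (hfg : ∀ e, deg e < m → coeff e f = coeff e g) :
    ordGE (dropBelow k f - dropBelow k g) m := fun d hd => by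
  rw [map_sub, coeff_dropBelow, coeff_dropBelow, hfg d hd, sub_self]

end DropBelow

/-- The system `a = p - R_x(a, b)`, `b = q - R_y(a, b)` as a map on coefficient families
`d ↦ (a_d, b_d)`, where `R_g(a, b) = Σ_{j ≥ 2} X^j(g) / j!`. The field is cut down to order `2`
first, so that the `d`-th output depends only on inputs of lower degree. -/
noncomputable def expEqMap (p q : F2) (u : (Fin 2 →₀ ℕ) → ℂ × ℂ) (d : Fin 2 →₀ ℕ) : ℂ × ℂ :=
  (coeff d (p - expRem (dropBelow 2 (Prod.fst ∘ u)) (dropBelow 2 (Prod.snd ∘ u)) Xv),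
    coeff d (q - expRem (dropBelow 2 (Prod.fst ∘ u)) (dropBelow 2 (Prod.snd ∘ u)) Yv))

section ExpEqMap

variable (p q : F2)

lemma expEqMap_causal (u v : (Fin 2 →₀ ℕ) → ℂ × ℂ) (d : Fin 2 →₀ ℕ)
    (huv : ∀ e, deg e < deg d → u e = v e) : expEqMap p q u d = expEqMap p q v d := by
  have hfst : ordGE (dropBelow 2 (Prod.fst ∘ u) - dropBelow 2 (Prod.fst ∘ v)) (deg d) :=
    ordGE_dropBelow_sub fun e he => congrArg Prod.fst (huv e he)
  have hsnd : ordGE (dropBelow 2 (Prod.snd ∘ u) - dropBelow 2 (Prod.snd ∘ v)) (deg d) :=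
    ordGE_dropBelow_sub fun e he => congrArg Prod.snd (huv e he)
  simp only [expEqMap, map_sub]
  rw [coeff_expRem_congr ordGE_dropBelow ordGE_dropBelow ordGE_dropBelow ordGE_dropBelow
      ordGE_Xv hfst hsnd,
    coeff_expRem_congr ordGE_dropBelow ordGE_dropBelow ordGE_dropBelow ordGE_dropBelow
      ordGE_Yv hfst hsnd]

variable {p q}

lemma ordGE_of_isFixedPt_expEqMap (hp : ordGE p 2) (hq : ordGE q 2)
    {u : (Fin 2 →₀ ℕ) → ℂ × ℂ} (hu : Function.IsFixedPt (expEqMap p q) u) :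
    ordGE (Prod.fst ∘ u) 2 ∧ ordGE (Prod.snd ∘ u) 2 := by
  rw [← hu]
  exact ⟨hp.sub ((ordGE_expRem ordGE_dropBelow ordGE_dropBelow ordGE_Xv).mono (by omega)),
    hq.sub ((ordGE_expRem ordGE_dropBelow ordGE_dropBelow ordGE_Yv).mono (by omega))⟩

lemma isFixedPt_expEqMap_iff {a b : F2} (ha : ordGE a 2) (hb : ordGE b 2) :
    Function.IsFixedPt (expEqMap p q) (fun d => (coeff d a, coeff d b)) ↔
      expX a b Xv = Xv + p ∧ expX a b Yv = Yv + q := by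
  have hfst : dropBelow 2 (Prod.fst ∘ fun d => (coeff d a, coeff d b)) = a :=
    dropBelow_eq_self ha
  have hsnd : dropBelow 2 (Prod.snd ∘ fun d => (coeff d a, coeff d b)) = b :=
    dropBelow_eq_self hb
  rw [expX_eq_add_expRem ha hb ordGE_Xv, expX_eq_add_expRem ha hb ordGE_Yv, vf_Xv, vf_Yv,
    add_assoc, add_assoc, add_right_inj, add_right_inj, ← eq_sub_iff_add_eq,
    ← eq_sub_iff_add_eq]
  simp only [Function.IsFixedPt, expEqMap, hfst, hsnd, funext_iff, Prod.ext_iff, forall_and,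
    ← MvPowerSeries.ext_iff]
  exact and_congr eq_comm eq_comm

end ExpEqMap

/-- Exp is a bijection from vector fields of order ≥ 2 onto tangent-to-identity
formal diffeomorphisms: every G = (x+p, y+q) with ν(p), ν(q) ≥ 2 has a unique preimage. -/
theorem Exp_bijective (p q : F2) (hp : ordGE p 2) (hq : ordGE q 2) :
    ∃! X : {ab : F2 × F2 // ordGE ab.1 2 ∧ ordGE ab.2 2},
      expX X.val.1 X.val.2 Xv = Xv + p ∧ expX X.val.1 X.val.2 Yv = Yv + q := by
  obtain ⟨u, hu, hunique⟩ :=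
    (measure deg).wf.existsUnique_isFixedPt_of_causal (expEqMap p q) (expEqMap_causal p q)
  obtain ⟨ha, hb⟩ := ordGE_of_isFixedPt_expEqMap hp hq hu
  refine ⟨⟨(Prod.fst ∘ u, Prod.snd ∘ u), ha, hb⟩, (isFixedPt_expEqMap_iff ha hb).1 hu, ?_⟩
  rintro ⟨⟨a, b⟩, ha', hb'⟩ hab
  obtain rfl := hunique _ ((isFixedPt_expEqMap_iff ha' hb').2 hab)
  rfl
end

section
/- Let F = Exp(X) = (x + p, y + q) be the tangent-to-identity formal diffeomorphism generated by a formal vector field X = a ∂/∂x + b ∂/∂y of order ≥ 2. Then the origin is an isolated zero of X (i.e., the ideal (a,b) contains a power of the maximal ideal (x,y)) if and only if the origin is an isolated fixed point of F (i.e., the ideal (p,q) contains a power of the maximal ideal). -/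
open Finsupp

/-!
Writing `X = a ∂ₓ + b ∂_y`, one has `exp X (g) - g = Σ_{j ≥ 0} X (X^j g) / (j+1)! = a·A_g + b·B_g`
with `A_g = Σ ∂ₓ(X^j g) / (j+1)!` and `B_g = Σ ∂_y(X^j g) / (j+1)!`; these sums converge formally
because `X` raises the order by at least one. Hence `(p, q) = (a, b) · M` for a matrix `M` whose
constant term is the linear part of `(x, y)`, i.e. the identity, so `M` is invertible and
`(p, q) = (a, b)` as ideals.
-/

theorem Ideal.span_pair_eq_of_isUnit_det {R : Type*} [CommRing R] {a b A B C D : R}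
    (h : IsUnit (A * D - B * C)) :
    Ideal.span {a * A + b * B, a * C + b * D} = Ideal.span {a, b} := by
  obtain ⟨e, he⟩ := h.exists_left_inv
  apply le_antisymm <;> rw [Ideal.span_le, Set.insert_subset_iff, Set.singleton_subset_iff] <;>
    refine ⟨Ideal.mem_span_pair.2 ?_, Ideal.mem_span_pair.2 ?_⟩
  · exact ⟨A, B, by ring⟩
  · exact ⟨C, D, by ring⟩
  · exact ⟨e * D, -(e * B), by linear_combination a * he⟩
  · exact ⟨-(e * C), e * A, by linear_combination b * he⟩

noncomputable section

namespace IsolatedFixedPoint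

open MvPowerSeries

lemma deg_add (d e : Fin 2 →₀ ℕ) : deg (d + e) = deg d + deg e := by
  simp only [deg, Finsupp.add_apply]; ring

lemma deg_single_one (i : Fin 2) : deg (Finsupp.single i 1) = 1 := by
  fin_cases i <;> simp [deg]

lemma ordGE_mul {f g : F2} {k l : ℕ} (hf : ordGE f k) (hg : ordGE g l) :
    ordGE (f * g) (k + l) := by
  intro d hd
  rw [coeff_mul]
  refine Finset.sum_eq_zero fun p hp => ?_
  have hdeg : deg p.1 + deg p.2 = deg d := by
    rw [← deg_add, Finset.HasAntidiagonal.mem_antidiagonal.1 hp]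
  by_cases h1 : deg p.1 < k
  · rw [hf _ h1, zero_mul]
  · rw [hg _ (by omega), mul_zero]

lemma ordGE_smul {f : F2} {k : ℕ} (c : ℂ) (hf : ordGE f k) : ordGE (c • f) k := by
  intro d hd
  rw [coeff_smul, hf d hd, mul_zero]

lemma ordGE_pd {f : F2} {k : ℕ} (i : Fin 2) (hf : ordGE f (k + 1)) : ordGE (pd i f) k := by
  intro d hd
  show ((d i : ℂ) + 1) * coeff (d + Finsupp.single i 1) f = 0
  rw [hf _ (by rw [deg_add, deg_single_one]; omega), mul_zero]

lemma ordGE_X (i : Fin 2) : ordGE (X i) 1 := by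
  intro d hd
  rw [coeff_X, if_neg]
  rintro rfl
  rw [deg_single_one] at hd
  omega

lemma ordGE_vf {a b g : F2} {k : ℕ} (ha : ordGE a 2) (hb : ordGE b 2) (hg : ordGE g (k + 1)) :
    ordGE (vf a b g) (k + 2) := by
  intro d hd
  rw [vf, map_add, ordGE_mul ha (ordGE_pd 0 hg) d (by omega),
    ordGE_mul hb (ordGE_pd 1 hg) d (by omega), add_zero]

lemma ordGE_iterate_vf {a b g : F2} (ha : ordGE a 2) (hb : ordGE b 2) (hg : ordGE g 1) (j : ℕ) :
    ordGE ((vf a b)^[j] g) (j + 1) := by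
  induction j with
  | zero => simpa using hg
  | succ n ih =>
    rw [Function.iterate_succ_apply']
    exact ordGE_vf ha hb ih

/-- The sum `Σ_j u j`, truncated in each coefficient of degree `n` after the term `j = n`;
it is the genuine formal sum as soon as `ordGE (u j) j` for all `j`. -/
def orderSum (u : ℕ → F2) : F2 :=
  fun d => ∑ j ∈ Finset.range (deg d + 1), coeff d (u j)

lemma coeff_orderSum (u : ℕ → F2) (d : Fin 2 →₀ ℕ) :
    coeff d (orderSum u) = ∑ j ∈ Finset.range (deg d + 1), coeff d (u j) := rfl

lemma constantCoeff_orderSum (u : ℕ → F2) : constantCoeff (orderSum u) = constantCoeff (u 0) := by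
  rw [← coeff_zero_eq_constantCoeff_apply, coeff_orderSum]
  simp [deg]

lemma coeff_orderSum_of_le {u : ℕ → F2} (hu : ∀ j, ordGE (u j) j) {d : Fin 2 →₀ ℕ} {n : ℕ}
    (hn : deg d ≤ n) : coeff d (orderSum u) = ∑ j ∈ Finset.range (n + 1), coeff d (u j) :=
  Finset.sum_subset (Finset.range_subset_range.2 (by omega)) fun j _ hj =>
    hu j d (by simp only [Finset.mem_range] at hj; omega)

lemma orderSum_add (u v : ℕ → F2) : orderSum u + orderSum v = orderSum (u + v) := by
  ext d
  simp only [map_add, coeff_orderSum, Pi.add_apply, Finset.sum_add_distrib]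

lemma mul_orderSum (f : F2) {u : ℕ → F2} (hu : ∀ j, ordGE (u j) j) :
    f * orderSum u = orderSum (fun j => f * u j) := by
  ext d
  rw [coeff_mul, coeff_orderSum]
  simp_rw [coeff_mul]
  rw [Finset.sum_comm]
  refine Finset.sum_congr rfl fun p hp => ?_
  have hle : deg p.2 ≤ deg d := by
    rw [← Finset.HasAntidiagonal.mem_antidiagonal.1 hp, deg_add]; omega
  rw [coeff_orderSum_of_le hu hle, Finset.mul_sum]

lemma orderSum_eq_add_orderSum_succ {u : ℕ → F2} (hu : ∀ j, ordGE (u j) (j + 1)) :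
    orderSum u = u 0 + orderSum (fun j => u (j + 1)) := by
  ext d
  rw [map_add, coeff_orderSum, coeff_orderSum, Finset.sum_range_succ',
    Finset.sum_range_succ (fun j => coeff d (u (j + 1))), hu (deg d + 1) d (by omega), add_zero,
    add_comm]

lemma expX_eq_orderSum {a b g : F2} (ha : ordGE a 2) (hb : ordGE b 2) (hg : ordGE g 1) :
    expX a b g = orderSum (fun j => ((j.factorial : ℂ))⁻¹ • (vf a b)^[j] g) := by
  ext d
  rw [coeff_orderSum]
  refine tsum_eq_sum fun j hj => ?_
  rw [Finset.mem_range, not_lt] at hj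
  rw [ordGE_iterate_vf ha hb hg j d (by omega), mul_zero]

def expCofactor (a b g : F2) (i : Fin 2) : F2 :=
  orderSum (fun j => (((j + 1).factorial : ℂ))⁻¹ • pd i ((vf a b)^[j] g))

lemma expX_sub_self {a b g : F2} (ha : ordGE a 2) (hb : ordGE b 2) (hg : ordGE g 1) :
    expX a b g - g = a * expCofactor a b g 0 + b * expCofactor a b g 1 := by
  have hpd (i : Fin 2) (j : ℕ) :
      ordGE ((((j + 1).factorial : ℂ))⁻¹ • pd i ((vf a b)^[j] g)) j :=
    ordGE_smul _ (ordGE_pd i (ordGE_iterate_vf ha hb hg j))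
  rw [expCofactor, expCofactor, mul_orderSum a (hpd 0), mul_orderSum b (hpd 1), orderSum_add,
    expX_eq_orderSum ha hb hg,
    orderSum_eq_add_orderSum_succ fun j => ordGE_smul _ (ordGE_iterate_vf ha hb hg j)]
  simp only [Function.iterate_succ_apply', Nat.factorial_zero, Nat.cast_one, inv_one,
    Function.iterate_zero, id_eq, one_smul, add_sub_cancel_left, vf, smul_add, mul_smul_comm]
  rfl

lemma constantCoeff_expCofactor (a b g : F2) (i : Fin 2) :
    constantCoeff (expCofactor a b g i) = coeff (Finsupp.single i 1) g := by
  rw [expCofactor, constantCoeff_orderSum, ← coeff_zero_eq_constantCoeff_apply, coeff_smul]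
  show _ * ((((0 : Fin 2 →₀ ℕ) i : ℂ) + 1) * coeff (0 + Finsupp.single i 1) g) = _
  simp

lemma isUnit_expCofactor_det (a b : F2) :
    IsUnit (expCofactor a b Xv 0 * expCofactor a b Yv 1 -
      expCofactor a b Xv 1 * expCofactor a b Yv 0) := by
  rw [isUnit_iff_constantCoeff]
  simp [constantCoeff_expCofactor, Xv, Yv, coeff_X, Finsupp.single_eq_single_iff]

end IsolatedFixedPoint

open IsolatedFixedPoint

/-- 0 is an isolated zero of X iff 0 is an isolated fixed point of F = Exp(X),
formalized as: (a,b) ⊇ m^N for some N iff (p,q) ⊇ m^N for some N, m = (x,y). -/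
theorem isolated_zero_iff_isolated_fixed_point (a b : F2) (ha : ordGE a 2) (hb : ordGE b 2) :
    (∃ N : ℕ, (Ideal.span {Xv, Yv}) ^ N ≤ Ideal.span {a, b}) ↔
    (∃ N : ℕ, (Ideal.span {Xv, Yv}) ^ N ≤
        Ideal.span {expX a b Xv - Xv, expX a b Yv - Yv}) := by
  have hx : ordGE Xv 1 := ordGE_X 0
  have hy : ordGE Yv 1 := ordGE_X 1
  rw [expX_sub_self ha hb hx, expX_sub_self ha hb hy,
    Ideal.span_pair_eq_of_isUnit_det (isUnit_expCofactor_det a b)]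

end
end

section
/- (Commutation of Exp with blow-up.) Let X be a formal vector field on C^2 of order ≥ 2 and F = Exp(X) the associated tangent-to-identity formal diffeomorphism. Let p = (0, v_0) be a characteristic direction of F (equivalently a point of the tangent cone of X) in the blow-up chart π(x,v) = (x, xv). Then the lift F̃ of F and the pullback X̃ of X satisfy F̃_p = Exp(X̃_p): the germ of the lifted diffeomorphism at p is the exponential of the germ of the pulled-back vector field. -/
open Finsupp

/-!
Write `ψ f = f(x, xv)` for the blow-up substitution. By the chain rule
`∂_v (ψ g) = x ψ(∂_y g)` and `∂_x (ψ g) = ψ(∂_x g) + v ψ(∂_y g)`, so the relations defining `X̃`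
say exactly that `X̃ (ψ g) = ψ (X g)`; hence `X̃ʲ ∘ ψ = ψ ∘ Xʲ` and, coefficientwise,
`Exp X̃ (ψ g) = ψ (Exp X g)`. For `g = x` this is the first component, since `ψ x = x`. For `g = y`
we have `ψ y = x v`, and the second component follows once `Exp X̃` is known to be multiplicative.

As `X` has order `≥ 2`, the coefficients of `X̃` are divisible by `x²` and `x`, so `X̃ʲ` takes
values in `xʲ F2`. Hence a coefficient of `Exp X̃ (g)` of `x`-degree `< N` only sees the truncation
`∑_{j<N} X̃ʲ(g)/j!`, and for truncations multiplicativity modulo `x^N` is the general Leibniz rule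
`X̃ⁿ(fg) = ∑ C(n,i) X̃ⁱ f X̃ⁿ⁻ⁱ g`.
-/

open MvPowerSeries Finset
open scoped Nat

namespace Derivation

variable {R A : Type*} [CommSemiring R] [CommSemiring A] [Algebra R A]

theorem iterate_map_mul (D : Derivation R A A) (n : ℕ) (f g : A) :
    D^[n] (f * g) = ∑ ij ∈ antidiagonal n, n.choose ij.1 • (D^[ij.1] f * D^[ij.2] g) := by
  induction n with
  | zero => simp
  | succ n ih =>
    rw [sum_antidiagonal_choose_succ_nsmul (fun i j => D^[i] f * D^[j] g) n]
    simp only [Function.iterate_succ_apply', ih, map_sum, map_nsmul, leibniz, smul_eq_mul,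
      smul_add, sum_add_distrib]
    congr 1
    refine sum_congr rfl fun ij hij => ?_
    rw [n.choose_symm_of_eq_add (mem_antidiagonal.1 hij).symm, nsmul_eq_mul, nsmul_eq_mul]
    ring

theorem pow_succ_dvd_map {D : Derivation R A A} {x : A} (hx : x ^ 2 ∣ D x)
    (hD : ∀ f, x ∣ D f) {m : ℕ} {g : A} (hg : x ^ m ∣ g) : x ^ (m + 1) ∣ D g := by
  obtain ⟨h, rfl⟩ := hg
  rw [leibniz, leibniz_pow, smul_eq_mul, smul_eq_mul, smul_eq_mul]
  refine dvd_add (by rw [pow_succ]; exact mul_dvd_mul_left _ (hD h)) ?_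
  rcases m with _ | m
  · simp
  · obtain ⟨c, hc⟩ := hx
    exact Dvd.intro (h * (m + 1) • c) (by rw [hc, add_tsub_cancel_right, pow_succ]; ring)

theorem pow_dvd_iterate {D : Derivation R A A} {x : A} (hx : x ^ 2 ∣ D x)
    (hD : ∀ f, x ∣ D f) (g : A) (j : ℕ) : x ^ j ∣ D^[j] g := by
  induction j with
  | zero => simp
  | succ j ih => rw [Function.iterate_succ_apply']; exact pow_succ_dvd_map hx hD ih

end Derivation

theorem Finset.sum_range_sum_antidiagonal_of_eq_zero {M : Type*} [AddCommMonoid M] (N : ℕ)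
    (G : ℕ → ℕ → M) (hG : ∀ i l, N ≤ i + l → G i l = 0) :
    ∑ n ∈ range N, ∑ il ∈ antidiagonal n, G il.1 il.2 = ∑ i ∈ range N, ∑ l ∈ range N, G i l := by
  simp only [Nat.sum_antidiagonal_eq_sum_range_succ_mk]
  rw [sum_range_diag_flip]
  refine sum_congr rfl fun i _ => sum_subset (range_subset_range.2 (N.sub_le i)) fun l _ hl => ?_
  exact hG i l (by simp only [mem_range] at hl; omega)

theorem inv_factorial_mul_choose {K : Type*} [Field K] [CharZero K] (i l : ℕ) :
    ((i + l)! : K)⁻¹ * (i + l).choose i = (i ! : K)⁻¹ * (l ! : K)⁻¹ := by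
  rw [Nat.cast_add_choose, mul_div, inv_mul_cancel₀ (Nat.cast_ne_zero.2 (Nat.factorial_ne_zero _)),
    one_div, mul_inv]

@[simp] theorem idx_apply_zero (m n : ℕ) : idx m n 0 = m := by simp [idx]

@[simp] theorem idx_apply_one (m n : ℕ) : idx m n 1 = n := by simp [idx]

theorem eq_idx_iff {d : Fin 2 →₀ ℕ} {m n : ℕ} : d = idx m n ↔ d 0 = m ∧ d 1 = n := by
  refine ⟨by rintro rfl; simp, fun ⟨h0, h1⟩ => Finsupp.ext fun i => ?_⟩
  fin_cases i <;> simp [h0, h1]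

theorem exists_eq_idx (d : Fin 2 →₀ ℕ) : ∃ m n, d = idx m n :=
  ⟨d 0, d 1, eq_idx_iff.2 ⟨rfl, rfl⟩⟩

@[simp] theorem idx_add_idx (m n p q : ℕ) : idx m n + idx p q = idx (m + p) (n + q) := by
  simp [idx, Finsupp.single_add]; abel

@[simp] theorem idx_sub_idx (m n p q : ℕ) : idx m n - idx p q = idx (m - p) (n - q) :=
  eq_idx_iff.2 (by simp)

@[simp] theorem idx_le_idx {m n p q : ℕ} : idx m n ≤ idx p q ↔ m ≤ p ∧ n ≤ q := by
  simp [Finsupp.le_def, Fin.forall_fin_two]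

theorem single_zero_one_eq_idx : Finsupp.single (0 : Fin 2) 1 = idx 1 0 := by simp [idx]

theorem single_one_one_eq_idx : Finsupp.single (1 : Fin 2) 1 = idx 0 1 := by simp [idx]

theorem coeff_X_mul (i : Fin 2) (h : F2) (d : Fin 2 →₀ ℕ) :
    coeff d (X i * h) =
      if Finsupp.single i 1 ≤ d then coeff (d - Finsupp.single i 1) h else 0 := by
  rw [X, coeff_monomial_mul, one_mul]

theorem Xv_pow_dvd_iff {n : ℕ} {f : F2} : Xv ^ n ∣ f ↔ ∀ e, e 0 < n → coeff e f = 0 :=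
  X_pow_dvd_iff

theorem Xv_ne_zero : Xv ≠ 0 := fun h => by
  simpa [Xv] using congrArg (coeff (Finsupp.single (0 : Fin 2) 1)) h

theorem pd_eq_pderiv (i : Fin 2) : pd i = pderiv ℂ i := by
  funext f; ext d
  rw [coeff_pderiv, mul_comm]; rfl

noncomputable def vfDerivation (a b : F2) : Derivation ℂ F2 F2 :=
  a • pderiv ℂ 0 + b • pderiv ℂ 1

theorem vf_eq_vfDerivation (a b : F2) : vf a b = vfDerivation a b := by
  funext g
  simp [vf, vfDerivation, pd_eq_pderiv]

section Exponential

variable {A B : F2}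

theorem pow_dvd_iterate_vf (hA : Xv ^ 2 ∣ A) (hB : Xv ∣ B) (g : F2) (j : ℕ) :
    Xv ^ j ∣ (vf A B)^[j] g := by
  rw [vf_eq_vfDerivation]
  refine Derivation.pow_dvd_iterate ?_ (fun f => ?_) g j
  · simpa [vfDerivation, Xv] using hA
  · simp only [vfDerivation, Derivation.add_apply, Derivation.smul_apply, smul_eq_mul]
    exact dvd_add (dvd_mul_of_dvd_left ((dvd_pow_self Xv two_ne_zero).trans hA) _)
      (dvd_mul_of_dvd_left hB _)

noncomputable def expTrunc (A B : F2) (N : ℕ) (g : F2) : F2 :=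
  ∑ j ∈ range N, (j ! : ℂ)⁻¹ • (vf A B)^[j] g

theorem expTrunc_mul (A B : F2) (N : ℕ) (f g : F2) :
    expTrunc A B N (f * g) = ∑ n ∈ range N, ∑ il ∈ antidiagonal n,
      ((il.1 ! : ℂ)⁻¹ * (il.2 ! : ℂ)⁻¹) • ((vf A B)^[il.1] f * (vf A B)^[il.2] g) := by
  refine sum_congr rfl fun n _ => ?_
  rw [vf_eq_vfDerivation, Derivation.iterate_map_mul, Finset.smul_sum]
  refine sum_congr rfl fun il hil => ?_
  rw [← mem_antidiagonal.1 hil, ← Nat.cast_smul_eq_nsmul ℂ, smul_smul, inv_factorial_mul_choose]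

theorem coeff_expX_eq_coeff_expTrunc (hA : Xv ^ 2 ∣ A) (hB : Xv ∣ B) (g : F2) {N : ℕ}
    {e : Fin 2 →₀ ℕ} (he : e 0 < N) : coeff e (expX A B g) = coeff e (expTrunc A B N g) := by
  change ∑' j : ℕ, _ = _
  rw [tsum_eq_sum (s := range N), expTrunc, map_sum]
  · simp
  · intro j hj
    rw [Xv_pow_dvd_iff.1 (pow_dvd_iterate_vf hA hB g j) e (by simp at hj; omega), mul_zero]

theorem coeff_expX_mul_eq_coeff_expTrunc_mul (hA : Xv ^ 2 ∣ A) (hB : Xv ∣ B) (f g : F2)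
    {N : ℕ} {e : Fin 2 →₀ ℕ} (he : e 0 < N) :
    coeff e (expX A B f * expX A B g) = coeff e (expTrunc A B N f * expTrunc A B N g) := by
  have hdiff (h : F2) : Xv ^ N ∣ expX A B h - expTrunc A B N h :=
    Xv_pow_dvd_iff.2 fun e he => by rw [map_sub, coeff_expX_eq_coeff_expTrunc hA hB h he, sub_self]
  have hdvd : Xv ^ N ∣ expX A B f * expX A B g - expTrunc A B N f * expTrunc A B N g := by
    convert dvd_add (dvd_mul_of_dvd_left (hdiff f) (expX A B g))
      (dvd_mul_of_dvd_right (hdiff g) (expTrunc A B N f)) using 1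
    ring
  rw [← sub_eq_zero, ← map_sub, Xv_pow_dvd_iff.1 hdvd e he]

theorem expX_mul (hA : Xv ^ 2 ∣ A) (hB : Xv ∣ B) (f g : F2) :
    expX A B (f * g) = expX A B f * expX A B g := by
  ext d
  have hd : d 0 < d 0 + 1 := Nat.lt_succ_self _
  rw [coeff_expX_eq_coeff_expTrunc hA hB _ hd, coeff_expX_mul_eq_coeff_expTrunc_mul hA hB f g hd,
    expTrunc_mul, expTrunc, expTrunc, sum_mul_sum]
  simp only [map_sum, smul_mul_smul_comm]
  refine sum_range_sum_antidiagonal_of_eq_zero _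
    (fun i l => coeff d (((i ! : ℂ)⁻¹ * (l ! : ℂ)⁻¹) • ((vf A B)^[i] f * (vf A B)^[l] g)))
    fun i l hil => ?_
  have := mul_dvd_mul (pow_dvd_iterate_vf hA hB f i) (pow_dvd_iterate_vf hA hB g l)
  rw [← pow_add] at this
  rw [coeff_smul, Xv_pow_dvd_iff.1 this d (by omega), mul_zero]

end Exponential

theorem hasSubst_blowup : HasSubst ![(X 0 : F2), X 0 * X 1] :=
  hasSubst_of_constantCoeff_zero (by simp [Fin.forall_fin_two])

theorem prod_blowup_pow (e : Fin 2 →₀ ℕ) :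
    (e.prod fun s n => ![(X 0 : F2), X 0 * X 1] s ^ n) = monomial (idx (e 0 + e 1) (e 1)) 1 := by
  rw [Finsupp.prod_fintype _ _ (by simp), Fin.prod_univ_two]
  simp [mul_pow, X_pow_eq, monomial_mul_monomial, idx, Finsupp.single_add, add_assoc]

theorem blowup_eq_subst (f : F2) : blowup f = subst ![(X 0 : F2), X 0 * X 1] f := by
  ext d
  rw [coeff_subst hasSubst_blowup]
  simp only [prod_blowup_pow, coeff_monomial, smul_eq_mul, mul_ite, mul_one, mul_zero]
  change (if d 1 ≤ d 0 then _ else _) = _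
  split_ifs with h
  · rw [finsum_eq_single _ (idx (d 0 - d 1) (d 1))]
    · rw [if_pos (eq_idx_iff.2 (by simp; omega))]
    · intro e he
      refine if_neg fun hde => he (eq_idx_iff.2 ?_)
      rw [eq_idx_iff] at hde
      omega
  · refine (finsum_eq_zero_of_forall_eq_zero fun e => if_neg ?_).symm
    rw [eq_idx_iff]
    omega

theorem blowup_mul (f g : F2) : blowup (f * g) = blowup f * blowup g := by
  simp only [blowup_eq_subst, subst_mul hasSubst_blowup]

theorem blowup_add (f g : F2) : blowup (f + g) = blowup f + blowup g := by
  simp only [blowup_eq_subst, subst_add hasSubst_blowup]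

theorem blowup_Xv : blowup Xv = Xv := by
  rw [blowup_eq_subst, Xv, subst_X hasSubst_blowup]
  rfl

theorem blowup_Yv : blowup Yv = Xv * Yv := by
  rw [blowup_eq_subst, Xv, Yv, subst_X hasSubst_blowup]
  rfl

theorem coeff_blowup (f : F2) (m n : ℕ) :
    coeff (idx m n) (blowup f) = if n ≤ m then coeff (idx (m - n) n) f else 0 := by
  change (if idx m n 1 ≤ idx m n 0 then _ else _) = _
  simp

theorem pderiv_one_blowup (g : F2) : pderiv ℂ 1 (blowup g) = Xv * blowup (pderiv ℂ 1 g) := by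
  ext d
  obtain ⟨m, n, rfl⟩ := exists_eq_idx d
  simp only [Xv, coeff_pderiv, coeff_X_mul, single_zero_one_eq_idx, single_one_one_eq_idx,
    idx_add_idx, idx_le_idx, idx_sub_idx, coeff_blowup, idx_apply_one]
  split_ifs <;> grind

theorem pderiv_zero_blowup (g : F2) :
    pderiv ℂ 0 (blowup g) = blowup (pderiv ℂ 0 g) + Yv * blowup (pderiv ℂ 1 g) := by
  ext d
  obtain ⟨m, n, rfl⟩ := exists_eq_idx d
  rcases n with _ | n <;>
  simp only [Yv, map_add, coeff_pderiv, coeff_X_mul, single_zero_one_eq_idx, single_one_one_eq_idx,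
    idx_add_idx, idx_le_idx, idx_sub_idx, coeff_blowup, idx_apply_one, idx_apply_zero] <;>
  split_ifs <;> grind [Nat.cast_sub]

theorem blowup_vf {aT bT at' bt' : F2} (hat : at' = blowup aT)
    (hbt : Xv * bt' = blowup bT - Yv * blowup aT) (g : F2) :
    vf at' bt' (blowup g) = blowup (vf aT bT g) := by
  simp only [vf, pd_eq_pderiv, pderiv_zero_blowup, pderiv_one_blowup, blowup_add, blowup_mul, hat]
  linear_combination blowup (pderiv ℂ 1 g) * hbt

theorem expX_blowup {aT bT at' bt' : F2} (hat : at' = blowup aT)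
    (hbt : Xv * bt' = blowup bT - Yv * blowup aT) (g : F2) :
    expX at' bt' (blowup g) = blowup (expX aT bT g) := by
  have hiter (j : ℕ) : (vf at' bt')^[j] (blowup g) = blowup ((vf aT bT)^[j] g) :=
    ((Function.Semiconj.iterate_right (fun h => (blowup_vf hat hbt h).symm) j) g).symm
  ext d
  obtain ⟨m, n, rfl⟩ := exists_eq_idx d
  rw [coeff_blowup]
  change ∑' j : ℕ, _ * coeff _ ((vf at' bt')^[j] (blowup g)) = _
  simp only [hiter, coeff_blowup]
  split_ifs
  · rfl
  · simp

theorem ordGE.mono_s12 {f : F2} {m m' : ℕ} (hf : ordGE f m) (h : m' ≤ m) : ordGE f m' :=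
  fun d hd => hf d (hd.trans_le h)

theorem ordGE.sub_s12 {f g : F2} {m : ℕ} (hf : ordGE f m) (hg : ordGE g m) : ordGE (f - g) m :=
  fun d hd => by rw [map_sub, hf d hd, hg d hd, sub_zero]

theorem ordGE.smul {f : F2} {m : ℕ} (c : ℂ) (hf : ordGE f m) : ordGE (c • f) m :=
  fun d hd => by rw [coeff_smul, hf d hd, mul_zero]

theorem ordGE.shear {f : F2} {m : ℕ} (v0 : ℂ) (hf : ordGE f m) : ordGE (shear v0 f) m := by
  intro d hd
  change ∑ j ∈ range (deg d + 1), _ = (0 : ℂ)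
  refine Finset.sum_eq_zero fun j _ => ?_
  split_ifs with h
  · rw [hf _ (by simp only [deg, idx_apply_zero, idx_apply_one] at hd ⊢; omega), mul_zero]
  · rfl

theorem ordGE.pow_dvd_blowup {f : F2} {m : ℕ} (hf : ordGE f m) : Xv ^ m ∣ blowup f := by
  refine Xv_pow_dvd_iff.2 fun d hd => ?_
  obtain ⟨p, n, rfl⟩ := exists_eq_idx d
  rw [coeff_blowup]
  split_ifs
  · exact hf _ (by simp only [deg, idx_apply_zero, idx_apply_one] at hd ⊢; omega)
  · rfl

theorem Xv_dvd_of_Xv_mul_eq {aT bT bt' : F2} (haT : ordGE aT 2) (hbT : ordGE bT 2)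
    (hbt : Xv * bt' = blowup bT - Yv * blowup aT) : Xv ∣ bt' := by
  have : Xv * Xv ∣ Xv * bt' := by
    rw [hbt, ← pow_two]
    exact dvd_sub hbT.pow_dvd_blowup (dvd_mul_of_dvd_right haT.pow_dvd_blowup _)
  exact (mul_dvd_mul_iff_left Xv_ne_zero).1 this

/-- Germs at `p = (0, v0)` are computed through the linear change `shear v0`: `aT`, `bT` are the
coefficients of the germ of `X` there, `at'`, `bt'` those of the pullback `X̃` at `p`, and the lift
of `Exp(X)` is described by its components `A = F₁(x, xv)` and `A·B = F₂(x, xv)`. -/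
theorem Exp_commutes_with_blowup_general (a b : F2) (k : ℕ) (hk : 2 ≤ k)
    (ha : ordGE a k) (hb : ordGE b k)
    (v0 : ℂ)
    (aT bT at' bt' : F2)
    (haT : aT = shear v0 a) (hbT : bT = shear v0 b - v0 • shear v0 a)
    (hat : at' = blowup aT)
    (hbt : Xv * bt' = blowup bT - Yv * blowup aT) :
    expX at' bt' Xv = blowup (expX aT bT Xv) ∧
    expX at' bt' Xv * expX at' bt' Yv = blowup (expX aT bT Yv) := by
  have haT2 : ordGE aT 2 := haT ▸ (ha.mono_s12 hk).shear v0
  have hbT2 : ordGE bT 2 := hbT ▸ ((hb.mono_s12 hk).shear v0).sub_s12 (((ha.mono_s12 hk).shear v0).smul v0)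
  have hA : Xv ^ 2 ∣ at' := hat ▸ haT2.pow_dvd_blowup
  have hB : Xv ∣ bt' := Xv_dvd_of_Xv_mul_eq haT2 hbT2 hbt
  constructor
  · rw [← expX_blowup hat hbt, blowup_Xv]
  · rw [← expX_mul hA hB, ← blowup_Yv, expX_blowup hat hbt]

/-- commutation of Exp with blow-up.  At a characteristic direction
p = (0,v0) of F = Exp(X) (equivalently a point of the tangent cone of X), the germ of the lift
F̃ at p equals Exp of the germ of the pullback X̃ at p.  Germs at (0,v0) are computed via the
linear change `shear v0`; aT, bT are the coefficients of the germ of X, at', bt' those of X̃ at p,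
and the lift of Exp(X) is characterized by its components A = F₁(x,xv), A·B = F₂(x,xv). -/
theorem Exp_commutes_with_blowup (a b : F2) (k : ℕ) (hk : 2 ≤ k)
    (ha : ordGE a k) (hb : ordGE b k)
    (v0 : ℂ) (hchar : evk k v0 b = v0 * evk k v0 a)
    (aT bT at' bt' : F2)
    (haT : aT = shear v0 a) (hbT : bT = shear v0 b - v0 • shear v0 a)
    (hat : at' = blowup aT)
    (hbt : Xv * bt' = blowup bT - Yv * blowup aT) :
    expX at' bt' Xv = blowup (expX aT bT Xv) ∧
    expX at' bt' Xv * expX at' bt' Yv = blowup (expX aT bT Yv) :=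
  Exp_commutes_with_blowup_general a b k hk ha hb v0 aT bT at' bt' haT hbT hat hbt
end
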